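/- arXiv:1104.2809 — 6 statements merged into one kernel-verified Lean document; each statement's English description precedes it below -/
import Mathlib

section
/- For every positive integer l and every n, if there exist functions f, g : {0,1,...,l} → {0,1}^n satisfying f(x) AND g(y) = 0^n if and only if x + y ≤ l (for all x, y in {0,...,l}), then n ≥ l. -/
/-! If `f x` and `g y` are disjoint exactly when `x + y ≤ l`, then for `i < l` the strings
`f (i + 1)` and `g (l - i)` share a coordinate, while `f (i + 1)` and `g (l - j)` are disjoint
for `i < j`. A coordinate shared by the `i`-th pair therefore determines `i`, which gives `l`
distinct coordinates. -/

theorem Fintype.card_le_of_skew_cross_intersecting {ι α : Type*} [LinearOrder ι] [Fintype ι]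
    [Fintype α] (A B : ι → Set α) (hdiag : ∀ i, (A i ∩ B i).Nonempty)
    (hskew : ∀ i j, i < j → Disjoint (A i) (B j)) :
    Fintype.card ι ≤ Fintype.card α := by
  choose φ hφ using hdiag
  refine Fintype.card_le_of_injective φ fun i j hij => ?_
  by_contra hne
  rcases lt_or_gt_of_ne hne with hlt | hlt
  · exact Set.disjoint_left.mp (hskew i j hlt) (hφ i).1 (hij ▸ (hφ j).2)
  · exact Set.disjoint_left.mp (hskew j i hlt) (hφ j).1 (hij ▸ (hφ i).2)

theorem stmt_1_general (l n : ℕ)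
    (f g : Fin (l + 1) → (Fin n → Bool))
    (h : ∀ x y : Fin (l + 1),
      (∀ k, (f x k && g y k) = false) ↔ (x : ℕ) + (y : ℕ) ≤ l) :
    l ≤ n := by
  have hcard := Fintype.card_le_of_skew_cross_intersecting
    (fun i : Fin l => {k | f ⟨i + 1, by omega⟩ k}) (fun i => {k | g ⟨l - i, by omega⟩ k})
    (fun i => by
      obtain ⟨k, hk⟩ := not_forall.mp <| mt (h ⟨i + 1, by omega⟩ ⟨l - i, by omega⟩).mp
        (by simp; omega)
      exact ⟨k, by simpa using hk⟩)
    (fun i j hij => by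
      have hdisj := (h ⟨i + 1, by omega⟩ ⟨l - j, by omega⟩).mpr (by simp; omega)
      exact Set.disjoint_left.mpr fun k (hf : f _ k) (hg : g _ k) => by
        simpa [hf, hg] using hdisj k)
  simpa using hcard

/-- Lower bound for the two function problem: any valid pair `(f, g)` with strings
of length `n` requires `n ≥ l`. -/
theorem stmt_1 (l n : ℕ) (hl : 0 < l)
    (f g : Fin (l + 1) → (Fin n → Bool))
    (h : ∀ x y : Fin (l + 1),
      (∀ k, (f x k && g y k) = false) ↔ (x : ℕ) + (y : ℕ) ≤ l) :
    l ≤ n :=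
  stmt_1_general l n f g h
end

section
/- Suppose f, g : {0,...,l} → {0,1}^n satisfy f(x) AND g(y) = 0^n iff x + y ≤ l, and additionally the support sets satisfy G(f(0)) ⊆ G(f(1)) ⊆ ... ⊆ G(f(l)), where G(s) is the set of positions where s has a 1. Then all the f(i) are pairwise distinct, the inclusions are strict, and hence n ≥ l. -/
/-!
If `x < y`, then `f x` is disjoint from `g (l - x)` while `f y` is not, so some coordinate lies in the
support of `f y` but not in that of `f x`. Together with the monotonicity of the supports this
makes them a strictly increasing chain of `l + 1` subsets of an `n`-element set, whose sizes
are then `l + 1` distinct numbers in `{0, …, n}`.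
-/

theorem Fin.exists_true_false_of_lt_of_and_eq_false_iff {ι : Type*} {l : ℕ}
    {f g : Fin (l + 1) → ι → Bool}
    (h : ∀ x y : Fin (l + 1), (∀ k, (f x k && g y k) = false) ↔ (x : ℕ) + (y : ℕ) ≤ l)
    {i j : Fin (l + 1)} (hij : i < j) : ∃ k, f j k = true ∧ f i k = false := by
  have hi : ∀ k, (f i k && g i.rev k) = false :=
    (h i i.rev).2 (by simp only [Fin.val_rev]; omega)
  have hj : ¬ ∀ k, (f j k && g i.rev k) = false := fun hj => by
    have := (h j i.rev).1 hj
    simp only [Fin.val_rev] at this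
    omega
  obtain ⟨k, hk⟩ := not_forall.1 hj
  rw [Bool.not_eq_false, Bool.and_eq_true] at hk
  exact ⟨k, hk.1, by simpa [hk.2] using hi k⟩

theorem Fin.le_card_of_strictMono_set {α : Type*} [Finite α] {l : ℕ} {s : Fin (l + 1) → Set α}
    (hs : StrictMono s) : l ≤ Nat.card α := by
  have hcard : StrictMono fun i => (s i).ncard := fun i j hij =>
    Set.ncard_lt_ncard (hs hij)
  let c : Fin (l + 1) → Fin (Nat.card α + 1) := fun i =>
    ⟨(s i).ncard, Nat.lt_succ_of_le (Set.ncard_le_card (s i))⟩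
  have hc : Function.Injective c := fun i j hij => hcard.injective (congrArg Fin.val hij)
  simpa using Fintype.card_le_of_injective c hc

/-- If `f, g` solve the two function problem and the supports of `f` form a monotone
chain, then the `f i` are pairwise distinct, the inclusions are strict, and `n ≥ l`. -/
theorem stmt_2 (l n : ℕ)
    (f g : Fin (l + 1) → (Fin n → Bool))
    (h : ∀ x y : Fin (l + 1),
      (∀ k, (f x k && g y k) = false) ↔ (x : ℕ) + (y : ℕ) ≤ l)
    (hmono : ∀ i j : Fin (l + 1), i ≤ j →
      {k : Fin n | f i k = true} ⊆ {k : Fin n | f j k = true}) :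
    (∀ i j : Fin (l + 1), i ≠ j → f i ≠ f j) ∧
    (∀ i j : Fin (l + 1), i < j →
      {k : Fin n | f i k = true} ⊂ {k : Fin n | f j k = true}) ∧
    l ≤ n := by
  have hstrict : StrictMono fun i => {k : Fin n | f i k = true} := fun i j hij => by
    obtain ⟨k, hkj, hki⟩ := Fin.exists_true_false_of_lt_of_and_eq_false_iff h hij
    exact (Set.ssubset_iff_of_subset (hmono i j hij.le)).2 ⟨k, hkj, by simp [hki]⟩
  refine ⟨fun i j hij hf => hij (hstrict.injective (by simp only [hf])),
    fun i j hij => hstrict hij, ?_⟩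
  simpa using Fin.le_card_of_strictMono_set hstrict
end

section
/- Let L(M) denote the minimum l for which the binary matrix M admits a {0,1}^l inner-product representation (M(i,j)=0 iff E_i·W_j=0). For the n×n diagonal-zero matrix Z_n (0 on the diagonal, 1 off-diagonal), L(Z_n) ≥ log₂ n + 1 for n ≥ 2. -/
/-!
Let `S i` and `T j` be the supports of `E i` and `W j`. The representation says exactly that
`S i` and `T j` are disjoint iff `i = j`. If `S i ⊆ S j`, then `S i` is disjoint from `T j`
because `S j` is, so `i = j`: the `S i` form an antichain of `n` distinct subsets of an
`l`-element set. Sperner's theorem gives `n ≤ choose l (l / 2) ≤ 2 ^ (l - 1)`, where `l ≥ 1`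
because `n ≥ 2`.
-/

open Finset

lemma Bool.sum_toNat_mul_eq_zero_iff_disjoint {α : Type*} [Fintype α] (a b : α → Bool) :
    ∑ k, (a k).toNat * (b k).toNat = 0 ↔
      Disjoint ({k | a k = true} : Finset α) ({k | b k = true} : Finset α) := by
  simp only [sum_eq_zero_iff, mem_univ, true_implies, disjoint_left, mem_filter, mul_eq_zero,
    Bool.toNat_eq_zero]
  exact forall_congr' fun k => by cases a k <;> simp

lemma card_le_choose_half_of_disjoint_iff {ι α : Type*} [Fintype ι] [Fintype α]
    (A B : ι → Finset α) (hAB : ∀ i j, Disjoint (A i) (B j) ↔ i = j) :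
    Fintype.card ι ≤ (Fintype.card α).choose (Fintype.card α / 2) := by
  classical
  have eq_of_subset : ∀ i j, A i ⊆ A j → i = j := fun i j hij =>
    (hAB i j).1 (((hAB j j).2 rfl).mono_left hij)
  have hinj : Function.Injective A := fun i j hij => eq_of_subset i j hij.le
  have hanti : IsAntichain (· ⊆ ·) (SetLike.coe (univ.image A)) := by
    rintro _ hs _ ht hne hsub
    obtain ⟨i, -, rfl⟩ := mem_image.1 hs
    obtain ⟨j, -, rfl⟩ := mem_image.1 ht
    exact hne (congrArg A (eq_of_subset i j hsub))
  simpa [card_image_of_injective _ hinj] using hanti.sperner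

/-- Any `{0,1}^l` inner-product representation of the `n × n` diagonal-zero matrix
(`E i · W j = 0` iff `i = j`) satisfies `l ≥ log₂ n + 1`, for `n ≥ 2`. -/
theorem stmt_8 (n l : ℕ) (hn : 2 ≤ n)
    (E W : Fin n → Fin l → Bool)
    (hrep : ∀ i j : Fin n, (∑ k, (E i k).toNat * (W j k).toNat = 0) ↔ i = j) :
    Real.logb 2 n + 1 ≤ (l : ℝ) := by
  have hsperner : n ≤ l.choose (l / 2) := by
    simpa using card_le_choose_half_of_disjoint_iff (fun i => ({k | E i k = true} : Finset _))
      (fun j => ({k | W j k = true} : Finset _))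
      fun i j => (Bool.sum_toNat_mul_eq_zero_iff_disjoint _ _).symm.trans (hrep i j)
  obtain ⟨m, rfl⟩ : ∃ m, l = m + 1 := by
    rcases l with _ | m
    · simp at hsperner; omega
    · exact ⟨m, rfl⟩
  have hpow : (n : ℝ) ≤ 2 ^ (m : ℝ) := by
    rw [Real.rpow_natCast]
    exact_mod_cast hsperner.trans (Nat.choose_succ_le_two_pow m _)
  have hlog : Real.logb 2 n ≤ m := (Real.logb_le_iff_le_rpow one_lt_two (by positivity)).2 hpow
  push_cast
  linarith
end

section
/- Let M be an m×n binary matrix and let M_1 = (R_1,C_1), ..., M_t = (R_t,C_t) be pairwise independent submatrices (R_i ∩ R_j = ∅ and C_i ∩ C_j = ∅ for i ≠ j) such that every 1-entry of M lies in some M_i, i.e., M(u,v)=1 implies (u,v) ∈ R_i × C_i for some i. Then L(M) = L(M_1) + L(M_2) + ... + L(M_t), where L denotes the minimum length of a {0,1}-vector inner-product representation. -/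
/-!
An inner-product representation of length `l` is the same thing as a cover of the `1`-entries
of `M` by `l` combinatorial rectangles (coordinate `k` contributes the rectangle
`{a | E a k} × {b | W b k}`). Gluing optimal covers of the blocks gives `L(M) ≤ Σ L(M_i)`.
Conversely, a rectangle of an optimal cover of `M` consists of `1`-entries, so by independence of
the blocks it meets the rows and columns of at most one block; restricting the cover to the
coordinates that meet block `i` represents `M_i`, whence `Σ L(M_i) ≤ L(M)`.
-/

/-- `L M` is the least length `l` of a `{0,1}^l` inner-product representation of the
binary matrix `M`, i.e. vectors `E i`, `W j` with `M i j = 0` iff `E i · W j = 0`. -/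
noncomputable def matrixRepLen {α β : Type} (M : α → β → Bool) : ℕ :=
  sInf {l | ∃ E : α → Fin l → Bool, ∃ W : β → Fin l → Bool,
    ∀ i j, (M i j = false ↔ ∑ k, (E i k).toNat * (W j k).toNat = 0)}

open Finset

section IsBoolRep

variable {α β ι κ : Type*}

def IsBoolRep (M : α → β → Bool) (E : α → ι → Bool) (W : β → ι → Bool) : Prop :=
  ∀ a b, M a b = true ↔ ∃ k, E a k = true ∧ W b k = true

lemma isBoolRep_iff_sum_eq_zero [Fintype ι] {M : α → β → Bool} {E : α → ι → Bool}
    {W : β → ι → Bool} :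
    IsBoolRep M E W ↔ ∀ a b, (M a b = false ↔ ∑ k, (E a k).toNat * (W b k).toNat = 0) := by
  refine forall₂_congr fun a b => ?_
  have hsum : (∑ k, (E a k).toNat * (W b k).toNat = 0) ↔ ¬∃ k, E a k = true ∧ W b k = true := by
    simp [Finset.sum_eq_zero_iff, or_iff_not_imp_left]
  rw [hsum, ← Bool.not_eq_true, not_iff_not]

lemma isBoolRep_self [DecidableEq β] (M : α → β → Bool) :
    IsBoolRep M M (fun b k => decide (b = k)) := by
  simp [IsBoolRep]

lemma IsBoolRep.comp_equiv {M : α → β → Bool} {E : α → ι → Bool} {W : β → ι → Bool}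
    (h : IsBoolRep M E W) (e : κ ≃ ι) :
    IsBoolRep M (fun a k => E a (e k)) (fun b k => W b (e k)) := fun a b =>
  (h a b).trans e.symm.exists_congr_left

lemma IsBoolRep.restrict {α' β' : Type*} {M : α → β → Bool} {E : α → ι → Bool}
    {W : β → ι → Bool} (h : IsBoolRep M E W) (f : α' → α) (g : β' → β) (p : ι → Prop)
    (hp : ∀ r c k, E (f r) k = true → W (g c) k = true → p k) :
    IsBoolRep (fun r c => M (f r) (g c)) (fun r (k : {k // p k}) => E (f r) k)
      (fun c (k : {k // p k}) => W (g c) k) := fun r c =>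
  (h (f r) (g c)).trans
    ⟨fun ⟨k, hE, hW⟩ => ⟨⟨k, hp r c k hE hW⟩, hE, hW⟩, fun ⟨k, hE, hW⟩ => ⟨k, hE, hW⟩⟩

end IsBoolRep

section matrixRepLen

variable {α β : Type}

lemma matrixRepLen_eq_sInf (M : α → β → Bool) :
    matrixRepLen M = sInf {l | ∃ E : α → Fin l → Bool, ∃ W : β → Fin l → Bool,
      IsBoolRep M E W} := by
  simp only [matrixRepLen, isBoolRep_iff_sum_eq_zero]

lemma matrixRepLen_le_card {ι : Type} [Fintype ι] {M : α → β → Bool} {E : α → ι → Bool}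
    {W : β → ι → Bool} (h : IsBoolRep M E W) : matrixRepLen M ≤ Fintype.card ι := by
  rw [matrixRepLen_eq_sInf]
  exact Nat.sInf_le ⟨_, _, h.comp_equiv (Fintype.equivFin ι).symm⟩

lemma exists_isBoolRep_matrixRepLen [Fintype β] (M : α → β → Bool) :
    ∃ E : α → Fin (matrixRepLen M) → Bool, ∃ W : β → Fin (matrixRepLen M) → Bool,
      IsBoolRep M E W := by
  classical
  have hne : {l | ∃ E : α → Fin l → Bool, ∃ W : β → Fin l → Bool, IsBoolRep M E W}.Nonempty :=
    ⟨Fintype.card β, _, _, (isBoolRep_self M).comp_equiv (Fintype.equivFin β).symm⟩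
  rw [matrixRepLen_eq_sInf]
  exact Nat.sInf_mem hne

end matrixRepLen

section Blocks

variable {α β τ : Type} (M : α → β → Bool) (R : τ → Finset α) (C : τ → Finset β)

lemma exists_isBoolRep_sigma {ι : τ → Type} (E : ∀ i, R i → ι i → Bool)
    (W : ∀ i, C i → ι i → Bool)
    (hEW : ∀ i, IsBoolRep (fun (r : R i) (c : C i) => M r c) (E i) (W i))
    (hcover : ∀ a b, M a b = true → ∃ i, a ∈ R i ∧ b ∈ C i) :
    ∃ (E' : α → (Σ i, ι i) → Bool) (W' : β → (Σ i, ι i) → Bool), IsBoolRep M E' W' := by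
  classical
  refine ⟨fun a k => if h : a ∈ R k.1 then E k.1 ⟨a, h⟩ k.2 else false,
    fun b k => if h : b ∈ C k.1 then W k.1 ⟨b, h⟩ k.2 else false, fun a b => ⟨?_, ?_⟩⟩
  · intro hM
    obtain ⟨i, ha, hb⟩ := hcover a b hM
    obtain ⟨k, hE, hW⟩ := ((hEW i) ⟨a, ha⟩ ⟨b, hb⟩).mp hM
    exact ⟨⟨i, k⟩, by simpa [ha] using hE, by simpa [hb] using hW⟩
  · rintro ⟨⟨i, k⟩, hE, hW⟩
    have ha : a ∈ R i := by_contra fun ha => by simp [ha] at hE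
    have hb : b ∈ C i := by_contra fun hb => by simp [hb] at hW
    simp only [dif_pos ha, dif_pos hb] at hE hW
    exact ((hEW i) ⟨a, ha⟩ ⟨b, hb⟩).mpr ⟨k, hE, hW⟩

lemma matrixRepLen_le_sum_blocks [Fintype τ]
    (hcover : ∀ a b, M a b = true → ∃ i, a ∈ R i ∧ b ∈ C i) :
    matrixRepLen M ≤ ∑ i, matrixRepLen (fun (r : R i) (c : C i) => M r c) := by
  choose E W hEW using fun i => exists_isBoolRep_matrixRepLen (fun (r : R i) (c : C i) => M r c)
  obtain ⟨E', W', h⟩ := exists_isBoolRep_sigma M R C E W hEW hcover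
  simpa using matrixRepLen_le_card h

variable {M R C}

lemma eq_of_apply_eq_true_of_mem_blocks (hR : ∀ i j, i ≠ j → Disjoint (R i) (R j))
    (hC : ∀ i j, i ≠ j → Disjoint (C i) (C j))
    (hcover : ∀ a b, M a b = true → ∃ i, a ∈ R i ∧ b ∈ C i)
    {a : α} {b : β} {i j : τ} (ha : a ∈ R i) (hb : b ∈ C j) (hM : M a b = true) : i = j := by
  obtain ⟨c, hac, hbc⟩ := hcover a b hM
  have hic : i = c := by_contra fun h => disjoint_left.mp (hR i c h) ha hac
  have hjc : j = c := by_contra fun h => disjoint_left.mp (hC j c h) hb hbc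
  exact hic.trans hjc.symm

lemma sum_blocks_le_matrixRepLen [Fintype β] [Fintype τ]
    (hR : ∀ i j, i ≠ j → Disjoint (R i) (R j)) (hC : ∀ i j, i ≠ j → Disjoint (C i) (C j))
    (hcover : ∀ a b, M a b = true → ∃ i, a ∈ R i ∧ b ∈ C i) :
    ∑ i, matrixRepLen (fun (r : R i) (c : C i) => M r c) ≤ matrixRepLen M := by
  classical
  obtain ⟨E, W, hEW⟩ := exists_isBoolRep_matrixRepLen M
  let K : τ → Finset (Fin (matrixRepLen M)) := fun i =>
    univ.filter fun k => (∃ a ∈ R i, E a k = true) ∧ (∃ b ∈ C i, W b k = true)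
  have hK_disjoint : Set.PairwiseDisjoint ↑(univ : Finset τ) K := by
    refine fun i _ j _ hij => disjoint_left.mpr fun k hki hkj => hij ?_
    obtain ⟨⟨a, ha, hE⟩, -⟩ := (mem_filter.mp hki).2
    obtain ⟨-, ⟨b, hb, hW⟩⟩ := (mem_filter.mp hkj).2
    exact eq_of_apply_eq_true_of_mem_blocks hR hC hcover ha hb ((hEW a b).mpr ⟨k, hE, hW⟩)
  have hblock : ∀ i, matrixRepLen (fun (r : R i) (c : C i) => M r c) ≤ #(K i) := fun i => by
    rw [← Fintype.card_coe]
    exact matrixRepLen_le_card <| hEW.restrict (fun r : R i => r.1) (fun c : C i => c.1)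
      (· ∈ K i) fun r c k hE hW => mem_filter.mpr ⟨mem_univ k, ⟨r, r.2, hE⟩, c, c.2, hW⟩
  calc ∑ i, matrixRepLen (fun (r : R i) (c : C i) => M r c)
      ≤ ∑ i, #(K i) := sum_le_sum fun i _ => hblock i
    _ = #(univ.biUnion K) := (card_biUnion hK_disjoint).symm
    _ ≤ matrixRepLen M := (card_le_univ _).trans_eq (Fintype.card_fin _)

end Blocks

/-- If all the `1` entries of `M` lie in pairwise independent submatrices
`(R i, C i)`, then `L(M) = Σ i, L(M_i)`. -/
theorem stmt_10 (m n t : ℕ) (M : Fin m → Fin n → Bool)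
    (R : Fin t → Finset (Fin m)) (C : Fin t → Finset (Fin n))
    (hR : ∀ i j : Fin t, i ≠ j → Disjoint (R i) (R j))
    (hC : ∀ i j : Fin t, i ≠ j → Disjoint (C i) (C j))
    (hcover : ∀ u v, M u v = true → ∃ i, u ∈ R i ∧ v ∈ C i) :
    matrixRepLen M = ∑ i : Fin t,
      matrixRepLen (fun (r : {x // x ∈ R i}) (c : {x // x ∈ C i}) => M r.1 c.1) :=
  (matrixRepLen_le_sum_blocks M R C hcover).antisymm (sum_blocks_le_matrixRepLen hR hC hcover)
end

section
/- Fix ε > 0. For all sufficiently large n, the fraction of n×n binary matrices M that admit a {0,1}^l inner-product representation with l ≤ n/2 − n^(1−ε) tends to 0; equivalently, the number of such matrices is o(2^(n²)). -/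
/-!
A representation by length-`l` vectors is determined by the pair `(E, W)`, so at most
`2 ^ (2 n l)` matrices are representable with length `l`, and padding with zeros shows the
lengths `l ≤ n/2 - n^(1-ε) < n/2` are all dominated by one `m` with `2 m < n`. Hence at most
`2 ^ (n² - n)` matrices qualify, a fraction `2⁻ⁿ` of all of them.
-/

open Filter

variable {ι κ : Type*}

def HasBoolRep (M : ι → κ → Bool) (l : ℕ) : Prop :=
  ∃ E : ι → Fin l → Bool, ∃ W : κ → Fin l → Bool,
    ∀ i j, (M i j = false ↔ ∑ k, (E i k).toNat * (W j k).toNat = 0)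

def padFalse {l : ℕ} (u : Fin l → Bool) (m : ℕ) (k : Fin m) : Bool :=
  if h : (k : ℕ) < l then u ⟨k, h⟩ else false

theorem sum_padFalse_eq_zero_iff {l m : ℕ} (hlm : l ≤ m) (u v : Fin l → Bool) :
    ∑ k : Fin m, (padFalse u m k).toNat * (padFalse v m k).toNat = 0 ↔
      ∑ k : Fin l, (u k).toNat * (v k).toNat = 0 := by
  simp only [Finset.sum_eq_zero_iff, Finset.mem_univ, true_implies]
  constructor
  · intro h k
    simpa [padFalse, k.2] using h ⟨k, k.2.trans_le hlm⟩
  · intro h k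
    by_cases hk : (k : ℕ) < l
    · simpa [padFalse, hk] using h ⟨k, hk⟩
    · simp [padFalse, hk]

theorem HasBoolRep.mono {M : ι → κ → Bool} {l m : ℕ} (h : HasBoolRep M l) (hlm : l ≤ m) :
    HasBoolRep M m := by
  obtain ⟨E, W, hEW⟩ := h
  exact ⟨fun i => padFalse (E i) m, fun j => padFalse (W j) m, fun i j =>
    (hEW i j).trans (sum_padFalse_eq_zero_iff hlm _ _).symm⟩

theorem HasBoolRep.card_le [Finite ι] [Finite κ] (l : ℕ) :
    Nat.card {M : ι → κ → Bool // HasBoolRep M l} ≤ 2 ^ ((Nat.card ι + Nat.card κ) * l) := by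
  let represented (EW : (ι → Fin l → Bool) × (κ → Fin l → Bool)) :
      {M : ι → κ → Bool // HasBoolRep M l} :=
    ⟨fun i j => decide (∑ k, (EW.1 i k).toNat * (EW.2 j k).toNat ≠ 0), EW.1, EW.2,
      fun i j => by simp only [decide_eq_false_iff_not, not_not]⟩
  have hsurj : represented.Surjective := by
    rintro ⟨M, E, W, hEW⟩
    refine ⟨(E, W), Subtype.ext (funext₂ fun i j => ?_)⟩
    change decide (∑ k, (E i k).toNat * (W j k).toNat ≠ 0) = M i j
    simp only [ne_eq, ← hEW i j, Bool.not_eq_false, Bool.decide_eq_true]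
  calc Nat.card {M : ι → κ → Bool // HasBoolRep M l}
      ≤ Nat.card ((ι → Fin l → Bool) × (κ → Fin l → Bool)) :=
        Nat.card_le_card_of_surjective represented hsurj
    _ = 2 ^ ((Nat.card ι + Nat.card κ) * l) := by
        simp only [Nat.card_prod, Nat.card_fun, Nat.card_eq_fintype_card, Fintype.card_fun,
          Fintype.card_bool, Fintype.card_fin]
        ring

theorem card_hasBoolRep_mul_two_pow_le {n m : ℕ} (hm : 2 * m < n) :
    Nat.card {M : Fin n → Fin n → Bool // HasBoolRep M m} * 2 ^ n ≤ 2 ^ (n ^ 2) := by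
  calc Nat.card {M : Fin n → Fin n → Bool // HasBoolRep M m} * 2 ^ n
      ≤ 2 ^ ((n + n) * m) * 2 ^ n := by
        simpa using Nat.mul_le_mul_right (2 ^ n) (HasBoolRep.card_le (ι := Fin n) (κ := Fin n) m)
    _ = 2 ^ (n * (2 * m + 1)) := by ring
    _ ≤ 2 ^ (n ^ 2) := Nat.pow_le_pow_right two_pos (by rw [sq]; gcongr; omega)

theorem two_mul_lt_of_le_half_sub_rpow {n l : ℕ} (hn : 0 < n) {ε : ℝ}
    (hl : (l : ℝ) ≤ n / 2 - (n : ℝ) ^ (1 - ε)) : 2 * l < n := by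
  have hpos : 0 < (n : ℝ) ^ (1 - ε) := Real.rpow_pos_of_pos (by exact_mod_cast hn) _
  exact_mod_cast (by linarith : (2 * l : ℝ) < n)

theorem stmt_11_general (ε : ℝ) :
    Filter.Tendsto (fun n : ℕ =>
      (Nat.card {M : Fin n → Fin n → Bool //
        ∃ l : ℕ, (l : ℝ) ≤ (n : ℝ) / 2 - (n : ℝ) ^ ((1 : ℝ) - ε) ∧
          ∃ E W : Fin n → Fin l → Bool,
            ∀ i j, (M i j = false ↔ ∑ k, (E i k).toNat * (W j k).toNat = 0)} : ℝ)
        / 2 ^ (n ^ 2)) Filter.atTop (nhds 0) := by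
  refine squeeze_zero' (Eventually.of_forall fun n => by positivity) ?_
    (tendsto_inv_atTop_zero.comp (tendsto_pow_atTop_atTop_of_one_lt one_lt_two))
  filter_upwards [eventually_gt_atTop 0] with n hn
  have hsub : ∀ M : Fin n → Fin n → Bool,
      (∃ l : ℕ, (l : ℝ) ≤ (n : ℝ) / 2 - (n : ℝ) ^ ((1 : ℝ) - ε) ∧ HasBoolRep M l) →
        HasBoolRep M ((n - 1) / 2) := by
    rintro M ⟨l, hl, hM⟩
    exact hM.mono (by have := two_mul_lt_of_le_half_sub_rpow hn hl; omega)
  have hcard := Nat.card_le_card_of_injective _ (Subtype.impEmbedding _ _ hsub).injective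
  have hbound := card_hasBoolRep_mul_two_pow_le (n := n) (m := (n - 1) / 2) (by omega)
  rw [Function.comp_apply, div_le_iff₀ (by positivity), le_inv_mul_iff₀ (by positivity)]
  exact_mod_cast (Nat.mul_le_mul_left _ hcard).trans (by rw [mul_comm]; exact hbound)

/-- For any fixed `ε > 0`, the fraction of `n × n` binary matrices admitting a
`{0,1}^l` inner-product representation with `l ≤ n/2 - n^(1-ε)` tends to `0`. -/
theorem stmt_11 (ε : ℝ) (hε : 0 < ε) :
    Filter.Tendsto (fun n : ℕ =>
      (Nat.card {M : Fin n → Fin n → Bool //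
        ∃ l : ℕ, (l : ℝ) ≤ (n : ℝ) / 2 - (n : ℝ) ^ ((1 : ℝ) - ε) ∧
          ∃ E W : Fin n → Fin l → Bool,
            ∀ i j, (M i j = false ↔ ∑ k, (E i k).toNat * (W j k).toNat = 0)} : ℝ)
        / 2 ^ (n ^ 2)) Filter.atTop (nhds 0) :=
  stmt_11_general ε
end

section
/- For any ε > 0 there exists a constant C such that for almost all positive integers n (i.e., for a fraction at least 1−2^{−Δ} of integers with Δ = ε log n), the Kolmogorov complexity of n satisfies K(n) ≥ (1−ε) log₂ n. Consequently, if every GTAM tile system with |T| tile types can be encoded in at most c₁|T|² bits and a fixed-size simulator can recover n from any encoding of a system uniquely assembling an n×n square, then for almost all n any such system needs |T| = Ω(√(log n)) tile types. -/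
/-!
Fewer than `2^m` numbers have a program of length `< m`, so at most `2·N^(1-ε)` numbers in
`[1, N]` have a program shorter than `(1-ε)·log₂ N`, a vanishing fraction of `N`. If a system
for the `n × n` square has fewer than `c·√(log₂ n)` tiles, where `c² = (1-ε)/max c₁ 1`, its
encoding is a program for `n` of length `< (1-ε)·log₂ n`, so such `n` are among these exceptions.
-/

open Filter Topology

def Compressible (U : List Bool → Option ℕ) (ε : ℝ) (n : ℕ) : Prop :=
  ∃ p : List Bool, U p = some n ∧ (p.length : ℝ) < (1 - ε) * Real.logb 2 n

def HasDensityZero (P : ℕ → Prop) : Prop :=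
  Tendsto (fun N : ℕ => (Nat.card {n : ℕ // n ∈ Finset.Icc 1 N ∧ P n} : ℝ) / N) atTop (𝓝 0)

theorem HasDensityZero.mono {P Q : ℕ → Prop} (hQ : HasDensityZero Q) (hPQ : ∀ n, P n → Q n) :
    HasDensityZero P := by
  refine squeeze_zero (fun N => by positivity) (fun N => ?_) hQ
  have hfin : {n | n ∈ Finset.Icc 1 N ∧ Q n}.Finite :=
    (Finset.Icc 1 N).finite_toSet.subset fun n hn => hn.1
  gcongr
  exact Nat.card_mono hfin fun n hn => ⟨hn.1, hPQ n hn.2⟩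

namespace List

theorem ncard_setOf_length_eq (α : Type*) [Fintype α] (k : ℕ) :
    {l : List α | l.length = k}.ncard = Fintype.card α ^ k := by
  rw [← Nat.card_coe_set_eq]
  exact (Nat.card_eq_fintype_card (α := List.Vector α k)).trans (card_vector k)

theorem ncard_setOf_length_lt_le (α : Type*) [Fintype α] (m : ℕ) :
    {l : List α | l.length < m}.ncard ≤ ∑ k ∈ Finset.range m, Fintype.card α ^ k := by
  have hunion : {l : List α | l.length < m} = ⋃ k ∈ Finset.range m, {l | l.length = k} := by
    ext; simp
  rw [hunion]
  refine (Finset.set_ncard_biUnion_le _ _).trans_eq ?_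
  simp only [ncard_setOf_length_eq]

end List

theorem ncard_decoded_of_length_lt_lt {β : Type*} (U : List Bool → Option β) (m : ℕ) :
    (some ⁻¹' (U '' {p | p.length < m})).ncard < 2 ^ m :=
  calc (some ⁻¹' (U '' {p | p.length < m})).ncard
      ≤ (U '' {p | p.length < m}).ncard :=
        Set.ncard_le_ncard_of_injOn some (fun _ h => h) (Option.some_injective _).injOn
          ((List.finite_length_lt Bool m).image U)
    _ ≤ {p : List Bool | p.length < m}.ncard := Set.ncard_image_le (List.finite_length_lt Bool m)
    _ ≤ ∑ k ∈ Finset.range m, 2 ^ k := by simpa using List.ncard_setOf_length_lt_le Bool m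
    _ < 2 ^ m := Nat.geomSum_lt le_rfl fun _ => Finset.mem_range.1

theorem ncard_compressible_le (U : List Bool → Option ℕ) {ε : ℝ} (hε1 : ε < 1) {N : ℕ}
    (hN : 1 ≤ N) :
    ({n | n ∈ Finset.Icc 1 N ∧ Compressible U ε n}.ncard : ℝ) ≤ 2 * (N : ℝ) ^ (1 - ε) := by
  set m := ⌈(1 - ε) * Real.logb 2 N⌉₊
  have hsub :
      {n | n ∈ Finset.Icc 1 N ∧ Compressible U ε n} ⊆ some ⁻¹' (U '' {p | p.length < m}) := by
    rintro n ⟨hn, p, hp, hlen⟩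
    obtain ⟨hn1, hnN⟩ := Finset.mem_Icc.1 hn
    have hlog : Real.logb 2 n ≤ Real.logb 2 N :=
      Real.logb_le_logb_of_le (by norm_num) (by exact_mod_cast hn1) (by exact_mod_cast hnN)
    refine ⟨p, ?_, hp⟩
    have : (p.length : ℝ) < m :=
      hlen.trans_le ((mul_le_mul_of_nonneg_left hlog (by linarith)).trans (Nat.le_ceil _))
    exact_mod_cast this
  have hm : (m : ℝ) ≤ (1 - ε) * Real.logb 2 N + 1 :=
    (Nat.ceil_lt_add_one (mul_nonneg (by linarith)
      (Real.logb_nonneg (by norm_num) (by exact_mod_cast hN)))).le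
  calc ({n | n ∈ Finset.Icc 1 N ∧ Compressible U ε n}.ncard : ℝ)
      ≤ (2 : ℝ) ^ (m : ℝ) := by
        rw [Real.rpow_natCast]
        exact_mod_cast (Set.ncard_le_ncard hsub ((List.finite_length_lt Bool m).image U |>.preimage
          (Option.some_injective _).injOn)).trans (ncard_decoded_of_length_lt_lt U m).le
    _ ≤ (2 : ℝ) ^ ((1 - ε) * Real.logb 2 N + 1) := Real.rpow_le_rpow_of_exponent_le (by norm_num) hm
    _ = 2 * (N : ℝ) ^ (1 - ε) := by
        rw [Real.rpow_add_one two_ne_zero, mul_comm (1 - ε), Real.rpow_mul zero_le_two,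
          Real.rpow_logb zero_lt_two (by norm_num) (by exact_mod_cast hN), mul_comm]

theorem hasDensityZero_compressible (U : List Bool → Option ℕ) {ε : ℝ} (hε0 : 0 < ε)
    (hε1 : ε < 1) : HasDensityZero (Compressible U ε) := by
  have hlim : Tendsto (fun N : ℕ => 2 * (N : ℝ) ^ (-ε)) atTop (𝓝 0) := by
    simpa using ((tendsto_rpow_neg_atTop hε0).comp tendsto_natCast_atTop_atTop).const_mul 2
  refine squeeze_zero' (.of_forall fun N => by positivity) ?_ hlim
  filter_upwards [eventually_ge_atTop 1] with N hN
  have hNpos : (0 : ℝ) < N := by exact_mod_cast hN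
  rw [div_le_iff₀ hNpos, mul_assoc, ← Real.rpow_add_one hNpos.ne', neg_add_eq_sub]
  exact ncard_compressible_le U hε1 hN

theorem lt_mul_of_le_mul_sq_of_lt_sqrt_mul {a c₁ t δ L : ℝ} (hδ : 0 ≤ δ) (ha : a ≤ c₁ * t ^ 2)
    (ht : 0 ≤ t) (htL : t < √(δ / max c₁ 1) * √L) : a < δ * L := by
  have hC : 0 < max c₁ 1 := lt_max_of_lt_right one_pos
  rw [← Real.sqrt_mul (div_nonneg hδ hC.le), Real.lt_sqrt ht] at htL
  calc a ≤ max c₁ 1 * t ^ 2 := ha.trans (by gcongr; exact le_max_left _ _)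
    _ < max c₁ 1 * (δ / max c₁ 1 * L) := by gcongr
    _ = δ * L := by field_simp

/-- (1) For any decoder `U` and any `0 < ε < 1`, for almost all `n` (in density),
every program `p` with `U p = n` has length at least `(1-ε)·log₂ n`, i.e.
`K(n) ≥ (1-ε)log₂ n`.  (2) Consequently, if GTAM systems are encoded in at most
`c₁|T|²` bits and a fixed simulator `U` recovers `n` from the encoding of any
system `sys n` uniquely assembling an `n × n` square, then for almost all `n` the
number of tile types satisfies `|T| = Ω(√(log n))`. -/
theorem stmt_18 (U : List Bool → Option ℕ) (ε : ℝ) (hε0 : 0 < ε) (hε1 : ε < 1) :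
    (Filter.Tendsto (fun N : ℕ =>
        (Nat.card {n : ℕ // n ∈ Finset.Icc 1 N ∧
          ∃ p : List Bool, U p = some n ∧
            (p.length : ℝ) < (1 - ε) * Real.logb 2 n} : ℝ) / (N : ℝ))
      Filter.atTop (nhds 0)) ∧
    (∀ (Sys : Type) (enc : Sys → List Bool) (numTiles : Sys → ℕ)
        (sys : ℕ → Sys) (c₁ : ℝ),
      (∀ s : Sys, ((enc s).length : ℝ) ≤ c₁ * (numTiles s : ℝ) ^ 2) →
      (∀ n : ℕ, U (enc (sys n)) = some n) →
      ∃ c : ℝ, 0 < c ∧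
        Filter.Tendsto (fun N : ℕ =>
            (Nat.card {n : ℕ // n ∈ Finset.Icc 1 N ∧
              (numTiles (sys n) : ℝ) < c * Real.sqrt (Real.logb 2 n)} : ℝ) / (N : ℝ))
          Filter.atTop (nhds 0)) := by
  have hK : HasDensityZero (Compressible U ε) := hasDensityZero_compressible U hε0 hε1
  refine ⟨hK, fun Sys enc numTiles sys c₁ hlen hU => ?_⟩
  refine ⟨√((1 - ε) / max c₁ 1), Real.sqrt_pos.2 (div_pos (by linarith) (by positivity)), ?_⟩
  exact hK.mono fun n hn => ⟨enc (sys n), hU n,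
    lt_mul_of_le_mul_sq_of_lt_sqrt_mul (by linarith) (hlen _) (Nat.cast_nonneg _) hn⟩
end
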